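/- arXiv:2111.04269 — 5 statements merged into one kernel-verified Lean document; each statement's English description precedes it below -/
import Mathlib

section
/- Suppose u₀ ∈ C(Ω) satisfies F(u₀) < +∞ and F(u₀) ≤ F(u) for all u ∈ C(Ω). Then u₀ coincides on Ω with its convex envelope relative to Ω₊ ∪ ∂Ω: for every x ∈ Ω, u₀(x) = sup{ℓ(x) : ℓ : ℝⁿ → ℝ affine with ℓ ≤ u₀ on Ω₊ ∪ ∂Ω}. -/
open MeasureTheory RealInnerProductSpace
open scoped ENNReal Classical

noncomputable section

abbrev Euc (n : ℕ) := EuclideanSpace ℝ (Fin n)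

/-- A set `S ⊆ ℝⁿ` has Lipschitz boundary: near each boundary point, after choosing
a unit direction `e`, `S` is the subgraph of a Lipschitz function on `e^⊥`. -/
def HasLipschitzBoundary {n : ℕ} (S : Set (Euc n)) : Prop :=
  ∀ z ∈ frontier S, ∃ (e : Euc n) (f : Euc n → ℝ) (K : NNReal) (ρ : ℝ),
    ‖e‖ = 1 ∧ 0 < ρ ∧ LipschitzWith K f ∧
    ∀ x ∈ Metric.ball z ρ, (x ∈ S ↔ ⟪e, x⟫ < f (x - ⟪e, x⟫ • e))

/-!
A competitor is obtained by raising `u₀` to `max u₀ ℓ` for an affine `ℓ ≤ u₀` on `Ω₊ ∪ ∂Ω`.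
This leaves the boundary term unchanged and can only lower `B(u) μ`, since `u` changes only where
`μ < 0`. Minimality then forces `B(max u₀ ℓ) μ = B(u₀) μ` almost everywhere; as `μ ≠ 0` a.e. and
`B` is injective, `max u₀ ℓ = u₀` a.e. on `Ω`, hence everywhere on `Ω` by continuity, i.e.
`ℓ ≤ u₀` on `Ω`. Conversely, a supporting hyperplane of `u₀` at `x ∈ Ω` is admissible.
-/

theorem ContinuousOn.isOpen_strict_epigraph {α β : Type*} [TopologicalSpace α]
    [TopologicalSpace β] [LinearOrder β] [OrderClosedTopology β] {s : Set α} {u : α → β}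
    (hs : IsOpen s) (hcont : ContinuousOn u s) :
    IsOpen {q : α × β | q.1 ∈ s ∧ u q.1 < q.2} := by
  have h := (hcont.comp continuousOn_fst fun _ hq => hq.1).prodMk continuousOn_snd
    |>.isOpen_inter_preimage (hs.prod isOpen_univ) isOpen_lt_prod
  convert h using 1
  ext q
  simp

section Subgradient

variable {E : Type*} [NormedAddCommGroup E] {s : Set E} {u : E → ℝ} {x : E}

theorem ConvexOn.continuousOn_of_closure [NormedSpace ℝ E] [FiniteDimensional ℝ E]
    (hs : IsOpen s) (hu : ConvexOn ℝ (closure s) u) : ContinuousOn u s :=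
  hu.continuousOn_interior.mono (interior_maximal subset_closure hs)

theorem ConvexOn.exists_subgradient_of_isOpen [NormedSpace ℝ E] (hs : IsOpen s)
    (hu : ConvexOn ℝ s u) (hcont : ContinuousOn u s) (hx : x ∈ s) :
    ∃ g : StrongDual ℝ E, ∀ y ∈ s, u x + g (y - x) ≤ u y := by
  obtain ⟨f, hf⟩ := geometric_hahn_banach_open_point hu.convex_strict_epigraph
    (hcont.isOpen_strict_epigraph hs) (x := (x, u x)) fun h => h.2.false
  -- `f` separates `(x, u x)` from the strict epigraph; its vertical coefficient `a` is negative,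
  -- and dividing by `-a` turns the separating hyperplane into the graph of a subgradient.
  set a := f (0, 1)
  have hf_apply (y : E) (t : ℝ) : f (y, t) = f (y, 0) + t * a := by
    rw [← smul_eq_mul, ← f.map_smul, ← map_add]
    simp
  have ha : a < 0 := by
    have := hf (x, u x + 1) ⟨hx, lt_add_one _⟩
    rw [hf_apply, hf_apply x (u x)] at this
    linarith
  refine ⟨(-a⁻¹) • f.comp (.inl ℝ E ℝ), fun y hy => le_of_forall_gt_imp_ge_of_dense fun t ht => ?_⟩
  have hyt := hf (y, t) ⟨hy, ht⟩
  rw [hf_apply, hf_apply x (u x)] at hyt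
  have hsub : f (y - x, 0) = f (y, 0) - f (x, 0) := by
    rw [← map_sub, Prod.mk_sub_mk, sub_zero]
  simp only [FunLike.coe_smul, Pi.smul_apply, ContinuousLinearMap.comp_apply,
    ContinuousLinearMap.inl_apply, hsub, smul_eq_mul]
  rw [show -a⁻¹ * (f (y, 0) - f (x, 0)) = (f (y, 0) - f (x, 0)) / -a by ring,
    ← le_sub_iff_add_le', div_le_iff₀ (neg_pos.2 ha)]
  linarith

theorem ConvexOn.add_apply_sub_le_of_mem_closure [NormedSpace ℝ E] (hs : IsOpen s)
    (hconv : Convex ℝ s) (hu : ConvexOn ℝ (closure s) u) (hx : x ∈ s) {g : StrongDual ℝ E}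
    (hg : ∀ y ∈ s, u x + g (y - x) ≤ u y) {y : E} (hy : y ∈ closure s) :
    u x + g (y - x) ≤ u y := by
  have hm : (1 / 2 : ℝ) • x + (1 / 2 : ℝ) • y ∈ s := by
    simpa [hs.interior_eq] using hconv.combo_interior_closure_mem_interior
      (by rwa [hs.interior_eq]) hy (by norm_num) (by norm_num) (by norm_num)
  have hu_mid := hu.2 (subset_closure hx) hy (by norm_num : (0 : ℝ) ≤ 1 / 2)
    (by norm_num : (0 : ℝ) ≤ 1 / 2) (by norm_num)
  have hg_mid := hg _ hm
  rw [show (1 / 2 : ℝ) • x + (1 / 2 : ℝ) • y - x = (1 / 2 : ℝ) • (y - x) by module,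
    map_smul, smul_eq_mul] at hg_mid
  simp only [smul_eq_mul] at hu_mid
  linarith

theorem ConvexOn.exists_inner_add_le_eq [InnerProductSpace ℝ E] [FiniteDimensional ℝ E]
    (hs : IsOpen s) (hconv : Convex ℝ s) (hu : ConvexOn ℝ (closure s) u) (hx : x ∈ s) :
    ∃ (p : E) (c : ℝ), (∀ y ∈ closure s, ⟪p, y⟫ + c ≤ u y) ∧ ⟪p, x⟫ + c = u x := by
  obtain ⟨g, hg⟩ := (hu.subset subset_closure hconv).exists_subgradient_of_isOpen hs
    (hu.continuousOn_of_closure hs) hx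
  set p := (InnerProductSpace.toDual ℝ E).symm g
  refine ⟨p, u x - ⟪p, x⟫, fun y hy => ?_, by ring⟩
  have := hu.add_apply_sub_le_of_mem_closure hs hconv hx hg hy
  rw [← InnerProductSpace.toDual_symm_apply, inner_sub_right] at this
  linarith

end Subgradient

section SignedLIntegral

variable {α : Type*} [MeasurableSpace α] {μ : Measure α} {f g : α → ℝ}

theorem lintegral_ofReal_ne_top_iff_integrable_max_zero (hf : AEStronglyMeasurable f μ) :
    ∫⁻ x, ENNReal.ofReal (f x) ∂μ ≠ ∞ ↔ Integrable (fun x => max (f x) 0) μ := by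
  rw [← lintegral_ofReal_ne_top_iff_integrable (f := fun x => max (f x) 0)
    (hf.sup aestronglyMeasurable_const) (.of_forall fun _ => le_max_right _ _)]
  simp

theorem integrable_of_lintegral_ofReal_ne_top (hf : AEStronglyMeasurable f μ)
    (hpos : ∫⁻ x, ENNReal.ofReal (f x) ∂μ ≠ ∞) (hneg : Integrable (fun x => max (-f x) 0) μ) :
    Integrable f μ := by
  convert ((lintegral_ofReal_ne_top_iff_integrable_max_zero hf).1 hpos).sub hneg using 1
  ext x
  simp [max_zero_sub_max_neg_zero_eq_self]

theorem MeasureTheory.Integrable.coe_add_lintegral_ofReal_sub (hf : Integrable f μ) (r : ℝ) :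
    (r : EReal) + (∫⁻ x, ENNReal.ofReal (f x) ∂μ : ℝ≥0∞)
      - (∫⁻ x, ENNReal.ofReal (-f x) ∂μ : ℝ≥0∞) = ((r + ∫ x, f x ∂μ : ℝ) : EReal) := by
  rw [integral_eq_lintegral_pos_part_sub_lintegral_neg_part hf,
    ← EReal.coe_ennreal_toReal
      ((lintegral_ofReal_ne_top_iff_integrable_max_zero hf.1).2 hf.pos_part),
    ← EReal.coe_ennreal_toReal ((lintegral_ofReal_ne_top_iff_integrable_max_zero
      (f := fun x => -f x) hf.1.neg).2 hf.neg_part)]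
  norm_cast
  ring

theorem ae_eq_of_ae_le_of_coe_add_lintegral_ofReal_sub_le (r : ℝ)
    (hf : AEStronglyMeasurable f μ) (hg : AEStronglyMeasurable g μ) (hgf : g ≤ᵐ[μ] f)
    (hfneg : Integrable (fun x => max (-f x) 0) μ) (hgneg : Integrable (fun x => max (-g x) 0) μ)
    (hfin : (r : EReal) + (∫⁻ x, ENNReal.ofReal (f x) ∂μ : ℝ≥0∞)
      - (∫⁻ x, ENNReal.ofReal (-f x) ∂μ : ℝ≥0∞) < ⊤)
    (hle : (r : EReal) + (∫⁻ x, ENNReal.ofReal (f x) ∂μ : ℝ≥0∞)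
      - (∫⁻ x, ENNReal.ofReal (-f x) ∂μ : ℝ≥0∞) ≤ (r : EReal)
      + (∫⁻ x, ENNReal.ofReal (g x) ∂μ : ℝ≥0∞) - (∫⁻ x, ENNReal.ofReal (-g x) ∂μ : ℝ≥0∞)) :
    g =ᵐ[μ] f := by
  have hfpos : ∫⁻ x, ENNReal.ofReal (f x) ∂μ ≠ ∞ := by
    intro htop
    rw [htop, ← EReal.coe_ennreal_toReal ((lintegral_ofReal_ne_top_iff_integrable_max_zero
      (f := fun x => -f x) hf.neg).2 hfneg)] at hfin
    simp at hfin
  have hfi := integrable_of_lintegral_ofReal_ne_top hf hfpos hfneg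
  have hgi : Integrable g μ := integrable_of_lintegral_ofReal_ne_top hg
    (ne_top_of_le_ne_top hfpos
      (lintegral_mono_ae (hgf.mono fun _ h => ENNReal.ofReal_le_ofReal h)))
    hgneg
  rw [hfi.coe_add_lintegral_ofReal_sub, hgi.coe_add_lintegral_ofReal_sub,
    EReal.coe_le_coe_iff] at hle
  exact (integral_eq_iff_of_ae_le hgi hfi hgf).1
    (le_antisymm (integral_mono_ae hgi hfi hgf) (by linarith))

end SignedLIntegral

theorem eqOn_of_comp_mul_ae_eq {X : Type*} [TopologicalSpace X] [MeasurableSpace X]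
    [OpensMeasurableSpace X] {ν : Measure X} [ν.IsOpenPosMeasure] {U : Set X} (hU : IsOpen U)
    {m : X → ℝ} (hm : ν {x ∈ U | m x = 0} = 0) {B : ℝ → ℝ} (hB : Function.Injective B)
    {u v : X → ℝ} (hu : ContinuousOn u U) (hv : ContinuousOn v U)
    (h : (fun x => B (v x) * m x) =ᵐ[ν.restrict U] fun x => B (u x) * m x) : Set.EqOn v u U := by
  have hm' : ∀ᵐ x ∂ν.restrict U, m x ≠ 0 := by
    rw [ae_restrict_iff'₀ hU.measurableSet.nullMeasurableSet]
    exact measure_mono_null (fun x hx => by simpa using hx) hm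
  refine ν.eqOn_open_of_ae_eq ?_ hU hv hu
  filter_upwards [h, hm'] with x hx hx0
  exact hB (mul_right_cancel₀ hx0 hx)

theorem Monotone.apply_max_mul_le {B : ℝ → ℝ} (hB : Monotone B) {a b m : ℝ}
    (h : 0 ≤ m → b ≤ a) : B (max a b) * m ≤ B a * m := by
  rcases le_or_gt 0 m with hm | hm
  · rw [max_eq_left (h hm)]
  · exact mul_le_mul_of_nonpos_right (hB (le_max_left a b)) hm.le

theorem stmt5_general (n : ℕ) (Ω : Set (Euc n))
    (hΩopen : IsOpen Ω) (hΩconv : Convex ℝ Ω)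
    (σm : Measure (Euc n)) (μf : Euc n → ℝ) (hμcont : ContinuousOn μf (closure Ω))
    (hzero : volume {x ∈ Ω | μf x = 0} = 0)
    (A B : ℝ → ℝ) (hBmono : StrictMono B)
    (CΩ : Set (Euc n → ℝ))
    (hCΩ : CΩ = {u | ConvexOn ℝ (closure Ω) u ∧
      IntegrableOn (fun x => |A (u x)|) (frontier Ω) σm})
    (hnegpart : ∀ u ∈ CΩ, IntegrableOn (fun x => max (-(B (u x) * μf x)) 0) Ω volume)
    (F : (Euc n → ℝ) → EReal)
    (hF : ∀ u, F u = ((∫ x in frontier Ω, A (u x) ∂σm : ℝ) : EReal)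
        + ((∫⁻ x in Ω, ENNReal.ofReal (B (u x) * μf x)) : ℝ≥0∞)
        - ((∫⁻ x in Ω, ENNReal.ofReal (-(B (u x) * μf x))) : ℝ≥0∞))
    (u₀ : Euc n → ℝ) (hu₀ : u₀ ∈ CΩ) (hfin : F u₀ < ⊤)
    (hmin : ∀ u ∈ CΩ, F u₀ ≤ F u) :
    ∀ x ∈ Ω,
      IsLUB {t : ℝ | ∃ (p : Euc n) (c : ℝ),
          (∀ z ∈ {x ∈ Ω | 0 ≤ μf x} ∪ frontier Ω, ⟪p, z⟫ + c ≤ u₀ z) ∧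
          t = ⟪p, x⟫ + c}
        (u₀ x) := by
  obtain ⟨hu₀conv, hu₀int⟩ : u₀ ∈ {u | ConvexOn ℝ (closure Ω) u ∧
      IntegrableOn (fun x => |A (u x)|) (frontier Ω) σm} := hCΩ ▸ hu₀
  have hmeas {u : Euc n → ℝ} (hu : ContinuousOn u Ω) :
      AEStronglyMeasurable (fun x => B (u x) * μf x) (volume.restrict Ω) :=
    ((hBmono.monotone.measurable.comp_aemeasurable (hu.aemeasurable hΩopen.measurableSet)).mul
      ((hμcont.mono subset_closure).aemeasurable hΩopen.measurableSet)).aestronglyMeasurable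
  have hu₀cont := hu₀conv.continuousOn_of_closure hΩopen
  intro x hx
  refine ⟨?_, fun t ht => ?_⟩
  · rintro _ ⟨p, c, hpc, rfl⟩
    set v := fun z => max (u₀ z) (⟪p, z⟫ + c)
    have hvconv : ConvexOn ℝ (closure Ω) v :=
      hu₀conv.sup (((innerₛₗ ℝ p).convexOn hu₀conv.1).add_const c)
    have hv_frontier : ∀ z ∈ frontier Ω, v z = u₀ z := fun z hz => max_eq_left (hpc z (.inr hz))
    have hv : v ∈ CΩ := hCΩ ▸ ⟨hvconv, hu₀int.congr_fun
      (fun z hz => by simp only [hv_frontier z hz]) isClosed_frontier.measurableSet⟩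
    have hBv : ∀ z ∈ Ω, B (v z) * μf z ≤ B (u₀ z) * μf z := fun z hz =>
      hBmono.monotone.apply_max_mul_le fun hμ => hpc z (.inl ⟨hz, hμ⟩)
    have hFv := hmin v hv
    rw [hF, hF, setIntegral_congr_fun isClosed_frontier.measurableSet
      fun z hz => congrArg A (hv_frontier z hz)] at hFv
    have hvcont := hvconv.continuousOn_of_closure hΩopen
    have hae := ae_eq_of_ae_le_of_coe_add_lintegral_ofReal_sub_le _ (hmeas hu₀cont)
      (hmeas hvcont) (ae_restrict_of_forall_mem hΩopen.measurableSet hBv)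
      (hnegpart u₀ hu₀) (hnegpart v hv) (hF u₀ ▸ hfin) hFv
    exact max_eq_left_iff.1
      (eqOn_of_comp_mul_ae_eq hΩopen hzero hBmono.injective hu₀cont hvcont hae hx)
  · obtain ⟨p, c, hpc, hx_eq⟩ := hu₀conv.exists_inner_add_le_eq hΩopen hΩconv hx
    refine hx_eq ▸ ht ⟨p, c, fun z hz => hpc z ?_, rfl⟩
    exact hz.elim (fun h => subset_closure h.1) (fun h => frontier_subset_closure h)

/-- In the setting of the minimization problem for
`F(u) = ∫_{∂Ω} A(u) dσ + ∫_Ω B(u) μ dx`, a minimizer `u₀ ∈ C(Ω)` coincides on `Ω` with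
its convex envelope relative to `Ω₊ ∪ ∂Ω`: for every `x ∈ Ω`, `u₀(x)` is the supremum of
`ℓ(x)` over all affine `ℓ` with `ℓ ≤ u₀` on `Ω₊ ∪ ∂Ω`. -/
theorem stmt5 (n : ℕ) (Ω : Set (Euc n))
    (hΩopen : IsOpen Ω) (hΩbdd : Bornology.IsBounded Ω) (hΩconv : Convex ℝ Ω)
    (σm : Measure (Euc n)) [IsFiniteMeasure σm] (hσsupp : σm (frontier Ω)ᶜ = 0)
    (μf : Euc n → ℝ) (hμcont : ContinuousOn μf (closure Ω))
    (hne : {x ∈ Ω | μf x < 0}.Nonempty)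
    (hLip : ∀ x ∈ {x ∈ Ω | μf x < 0},
      HasLipschitzBoundary (connectedComponentIn {x ∈ Ω | μf x < 0} x))
    (hzero : volume {x ∈ Ω | μf x = 0} = 0)
    (A B : ℝ → ℝ) (hAcont : Continuous A) (hAmono : Monotone A)
    (hBcont : Continuous B) (hBmono : StrictMono B)
    (CΩ : Set (Euc n → ℝ))
    (hCΩ : CΩ = {u | ConvexOn ℝ (closure Ω) u ∧
      IntegrableOn (fun x => |A (u x)|) (frontier Ω) σm})
    (hnegpart : ∀ u ∈ CΩ, IntegrableOn (fun x => max (-(B (u x) * μf x)) 0) Ω volume)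
    (F : (Euc n → ℝ) → EReal)
    (hF : ∀ u, F u = ((∫ x in frontier Ω, A (u x) ∂σm : ℝ) : EReal)
        + ((∫⁻ x in Ω, ENNReal.ofReal (B (u x) * μf x)) : ℝ≥0∞)
        - ((∫⁻ x in Ω, ENNReal.ofReal (-(B (u x) * μf x))) : ℝ≥0∞))
    (u₀ : Euc n → ℝ) (hu₀ : u₀ ∈ CΩ) (hfin : F u₀ < ⊤)
    (hmin : ∀ u ∈ CΩ, F u₀ ≤ F u) :
    ∀ x ∈ Ω,
      IsLUB {t : ℝ | ∃ (p : Euc n) (c : ℝ),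
          (∀ z ∈ {x ∈ Ω | 0 ≤ μf x} ∪ frontier Ω, ⟪p, z⟫ + c ≤ u₀ z) ∧
          t = ⟪p, x⟫ + c}
        (u₀ x) :=
  stmt5_general n Ω hΩopen hΩconv σm μf hμcont hzero A B hBmono CΩ hCΩ hnegpart F hF u₀ hu₀ hfin
    hmin
end
end

section
/- There exists a constant c > 0, depending only on P, α₁ and α₂, such that for every Λ ∈ V₊ and every λ ∈ ℝ one has H¹({y ∈ ∂P ∩ V₊ : ⟨Λ,y⟩ ≥ λ}) ≥ c · H¹({y ∈ P ∩ ∂V₊ : ⟨Λ,y⟩ ≥ λ}); i.e. for any W-dominate simple piecewise linear function φ = max{⟨Λ,·⟩ − λ, 0} on P₊, the part of the boundary of its support lying on the outer boundary ∂P of P₊ has 1-dimensional measure at least c times that of the part lying on the Weyl walls ∂V₊. -/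
/-!
Each Weyl wall `{⟪α, ·⟫ = 0} ∩ V₊` is handled separately. Push a point `y` of the wall part of
`P₊` along the direction `w ≠ 0` parallel to the other wall `{⟪β, ·⟫ = 0}`; since `⟪α, β⟫ ≤ 0`,
`w` is a nonnegative combination of `α` and `β`, so along the ray `y + s • w` (`s ≥ 0`) we stay in
`V₊` and `⟪Λ, ·⟫` does not decrease. By compactness the ray leaves `P` through a point of `∂P`,
which therefore lies in `∂P ∩ V₊ ∩ {⟪Λ, ·⟫ ≥ λ}`. Projecting back onto the wall along `w` is
a fixed linear map, hence Lipschitz, and maps this boundary set onto a superset of the wall set;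
so the `H¹`-measure of the wall set is at most a fixed multiple of that of the boundary set.
-/

open MeasureTheory RealInnerProductSpace
open scoped ENNReal

noncomputable section

abbrev Euc2 := EuclideanSpace ℝ (Fin 2)

open scoped NNReal

theorem IsCompact.exists_nonneg_add_smul_mem_frontier {E : Type*} [NormedAddCommGroup E]
    [NormedSpace ℝ E] {P : Set E} (hP : IsCompact P) {x v : E} (hx : x ∈ P) (hv : v ≠ 0) :
    ∃ s : ℝ, 0 ≤ s ∧ x + s • v ∈ frontier P := by
  have : PreconnectedSpace (Set.Ici (0 : ℝ)) := Subtype.preconnectedSpace isPreconnected_Ici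
  let ray : Set.Ici (0 : ℝ) → E := fun s => x + (s : ℝ) • v
  obtain ⟨R, hR⟩ := hP.isBounded.subset_closedBall x
  have hR0 : 0 ≤ R := by simpa using hR hx
  have hv' : 0 < ‖v‖ := norm_pos_iff.mpr hv
  have hout : ray ⟨(R + 1) / ‖v‖, div_nonneg (by linarith) hv'.le⟩ ∉ P := fun h => by
    have := hR h
    rw [Metric.mem_closedBall, dist_eq_norm, add_sub_cancel_left, norm_smul, Real.norm_eq_abs,
      abs_of_nonneg (by positivity), div_mul_cancel₀ _ hv'.ne'] at this
    linarith
  obtain ⟨s, hs⟩ := nonempty_frontier_iff (s := ray ⁻¹' P) |>.mpr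
    ⟨⟨⟨0, Set.self_mem_Ici⟩, by simpa [ray] using hx⟩,
      fun h => hout (Set.eq_univ_iff_forall.mp h _)⟩
  exact ⟨s, s.2, (by fun_prop : Continuous ray).frontier_preimage_subset P hs⟩

theorem ENNReal.ofReal_inv_add_one_mul_le {a b : ℝ≥0∞} {K : ℝ≥0} (h : a ≤ K * b) :
    ENNReal.ofReal ((K : ℝ) + 1)⁻¹ * a ≤ b := by
  have hK : ENNReal.ofReal ((K : ℝ) + 1) = K + 1 := by
    rw [ENNReal.ofReal_add K.coe_nonneg zero_le_one]; simp
  rw [ENNReal.ofReal_inv_of_pos (by positivity), hK]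
  calc ((K : ℝ≥0∞) + 1)⁻¹ * a ≤ ((K : ℝ≥0∞) + 1)⁻¹ * ((K + 1) * b) := by
        gcongr; exact h.trans (by gcongr; exact le_self_add)
    _ = b := ENNReal.inv_mul_cancel_left (by simp) (by simp)

section Chamber

variable {E : Type*} [NormedAddCommGroup E] [InnerProductSpace ℝ E]

def chamber (α β : E) : Set E := {z | 0 ≤ ⟪α, z⟫ ∧ 0 ≤ ⟪β, z⟫}

theorem chamber_comm (α β : E) : chamber α β = chamber β α := by
  ext z; exact and_comm

theorem frontier_chamber_subset (α β : E) :
    frontier (chamber α β) ⊆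
      {z | z ∈ chamber α β ∧ ⟪α, z⟫ = 0} ∪ {z | z ∈ chamber α β ∧ ⟪β, z⟫ = 0} := by
  have hα : Continuous fun z : E => ⟪α, z⟫ := continuous_const.inner continuous_id
  have hβ : Continuous fun z : E => ⟪β, z⟫ := continuous_const.inner continuous_id
  have hclosed : IsClosed (chamber α β) :=
    (isClosed_le continuous_const hα).inter (isClosed_le continuous_const hβ)
  intro z hz
  have hmem := hclosed.frontier_subset hz
  rcases frontier_inter_subset _ _ hz with ⟨h, -⟩ | ⟨-, h⟩
  · exact Or.inl ⟨hmem, (frontier_le_subset_eq continuous_const hα h).symm⟩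
  · exact Or.inr ⟨hmem, (frontier_le_subset_eq continuous_const hβ h).symm⟩

def orthComponent (α β : E) : E := β - (⟪α, β⟫ / ⟪α, α⟫) • α

variable {α β : E}

theorem inner_orthComponent_left (α β : E) : ⟪α, orthComponent α β⟫ = 0 := by
  rcases eq_or_ne α 0 with rfl | hα
  · simp
  · rw [orthComponent, inner_sub_right, real_inner_smul_right,
      div_mul_cancel₀ _ (inner_self_ne_zero.mpr hα), sub_self]

theorem inner_orthComponent_right (α β : E) :
    ⟪β, orthComponent α β⟫ = ⟪orthComponent α β, orthComponent α β⟫ := by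
  rw [eq_comm]
  nth_rw 1 [orthComponent]
  rw [inner_sub_left, real_inner_smul_left, inner_orthComponent_left, mul_zero, sub_zero]

theorem orthComponent_ne_zero (hind : LinearIndependent ℝ ![α, β]) : orthComponent α β ≠ 0 := by
  intro h
  have := LinearIndependent.pair_iff.mp hind (-(⟪α, β⟫ / ⟪α, α⟫)) 1
    (by rw [← h, orthComponent, neg_smul, one_smul, neg_add_eq_sub])
  exact one_ne_zero this.2

theorem inner_orthComponent_nonneg (hobtuse : ⟪α, β⟫ ≤ 0) {z : E} (hz : z ∈ chamber α β) :
    0 ≤ ⟪z, orthComponent α β⟫ := by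
  have hc : ⟪α, β⟫ / ⟪α, α⟫ ≤ 0 := div_nonpos_of_nonpos_of_nonneg hobtuse real_inner_self_nonneg
  rw [orthComponent, inner_sub_right, real_inner_smul_right, real_inner_comm α z,
    real_inner_comm β z]
  nlinarith [hz.1, hz.2]

theorem eq_zero_of_inner_eq_zero_of_linearIndependent [FiniteDimensional ℝ E]
    (hE : Module.finrank ℝ E = 2) {v : E} (hind : LinearIndependent ℝ ![α, β]) (hα : ⟪α, v⟫ = 0)
    (hβ : ⟪β, v⟫ = 0) : v = 0 := by
  let b := basisOfLinearIndependentOfCardEqFinrank hind (by simp [hE])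
  refine InnerProductSpace.ext_inner_left_basis b fun i => ?_
  fin_cases i <;> simp [b, hα, hβ]

/-- In dimension 2, the projection onto the wall `α^⊥` along `β^⊥`. -/
def wallProjection (α β : E) : E →L[ℝ] E :=
  (innerSL ℝ β).smulRight (⟪orthComponent α β, orthComponent α β⟫⁻¹ • orthComponent α β)

theorem wallProjection_apply (α β y : E) :
    wallProjection α β y = ⟪β, y⟫ • ⟪orthComponent α β, orthComponent α β⟫⁻¹ • orthComponent α β :=
  rfl

theorem wallProjection_apply_of_inner_eq_zero [FiniteDimensional ℝ E]
    (hE : Module.finrank ℝ E = 2) (hind : LinearIndependent ℝ ![α, β]) {y : E} (hy : ⟪α, y⟫ = 0) :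
    wallProjection α β y = y := by
  have hu : ⟪orthComponent α β, orthComponent α β⟫ ≠ 0 :=
    inner_self_ne_zero.mpr (orthComponent_ne_zero hind)
  refine (sub_eq_zero.mp (eq_zero_of_inner_eq_zero_of_linearIndependent hE hind ?_ ?_)).symm
  · rw [inner_sub_right, hy, wallProjection_apply, real_inner_smul_right, real_inner_smul_right,
      inner_orthComponent_left]
    ring
  · rw [inner_sub_right, wallProjection_apply, real_inner_smul_right, real_inner_smul_right,
      inner_orthComponent_right, inv_mul_cancel₀ hu]
    ring

theorem hausdorffMeasure_wall_le [FiniteDimensional ℝ E] [MeasurableSpace E] [BorelSpace E]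
    (hE : Module.finrank ℝ E = 2) (hind : LinearIndependent ℝ ![α, β]) (hobtuse : ⟪α, β⟫ ≤ 0)
    {P : Set E} (hP : IsCompact P) :
    ∃ K : ℝ≥0, ∀ Λ ∈ chamber α β, ∀ lam : ℝ,
      μH[1] {y | y ∈ P ∩ chamber α β ∧ ⟪α, y⟫ = 0 ∧ lam ≤ ⟪Λ, y⟫} ≤
        K * μH[1] {y | y ∈ frontier P ∩ chamber α β ∧ lam ≤ ⟪Λ, y⟫} := by
  refine ⟨‖wallProjection α β‖₊, fun Λ hΛ lam => ?_⟩
  set w := orthComponent β α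
  have hind' : LinearIndependent ℝ ![β, α] := LinearIndependent.pair_symm_iff.mp hind
  have hαw : ⟪α, w⟫ = ⟪w, w⟫ := inner_orthComponent_right β α
  have hβw : ⟪β, w⟫ = 0 := inner_orthComponent_left β α
  have hΛw : 0 ≤ ⟪Λ, w⟫ :=
    inner_orthComponent_nonneg (real_inner_comm α β ▸ hobtuse) (chamber_comm α β ▸ hΛ)
  suffices hsub : {y | y ∈ P ∩ chamber α β ∧ ⟪α, y⟫ = 0 ∧ lam ≤ ⟪Λ, y⟫} ⊆
      wallProjection α β '' {y | y ∈ frontier P ∩ chamber α β ∧ lam ≤ ⟪Λ, y⟫} by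
    refine (measure_mono hsub).trans ?_
    simpa using (wallProjection α β).lipschitz.hausdorffMeasure_image_le zero_le_one _
  rintro y ⟨⟨hyP, hyα, hyβ⟩, hy0, hylam⟩
  obtain ⟨s, hs, hfr⟩ := hP.exists_nonneg_add_smul_mem_frontier hyP (orthComponent_ne_zero hind')
  refine ⟨y + s • w, ⟨⟨hfr, ?_, ?_⟩, ?_⟩, ?_⟩
  · rw [inner_add_right, real_inner_smul_right, hαw]
    nlinarith [real_inner_self_nonneg (x := w)]
  · rw [inner_add_right, real_inner_smul_right, hβw]
    linarith
  · rw [inner_add_right, real_inner_smul_right]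
    nlinarith
  · rw [map_add, map_smul, wallProjection_apply_of_inner_eq_zero hE hind hy0, wallProjection_apply,
      hβw, zero_smul, smul_zero, add_zero]

end Chamber

theorem stmt8_general (α₁ α₂ : Euc2)
    (hind : LinearIndependent ℝ ![α₁, α₂]) (hobtuse : ⟪α₁, α₂⟫ ≤ 0)
    (P : Set Euc2) (V : Finset Euc2) (hP : P = convexHull ℝ (V : Set Euc2)) :
    ∃ c : ℝ, 0 < c ∧
      ∀ Λ : Euc2, 0 ≤ ⟪α₁, Λ⟫ → 0 ≤ ⟪α₂, Λ⟫ → ∀ lam : ℝ,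
        ENNReal.ofReal c *
            μH[(1 : ℝ)] {y | y ∈ P ∩ frontier {z : Euc2 | 0 ≤ ⟪α₁, z⟫ ∧ 0 ≤ ⟪α₂, z⟫} ∧
              lam ≤ ⟪Λ, y⟫} ≤
          μH[(1 : ℝ)] {y | y ∈ frontier P ∩ {z : Euc2 | 0 ≤ ⟪α₁, z⟫ ∧ 0 ≤ ⟪α₂, z⟫} ∧
            lam ≤ ⟪Λ, y⟫} := by
  have hPc : IsCompact P := hP ▸ V.finite_toSet.isCompact_convexHull ℝ
  have hE : Module.finrank ℝ Euc2 = 2 := finrank_euclideanSpace_fin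
  obtain ⟨K₁, hK₁⟩ := hausdorffMeasure_wall_le hE hind hobtuse hPc
  obtain ⟨K₂, hK₂⟩ := hausdorffMeasure_wall_le hE (LinearIndependent.pair_symm_iff.mp hind)
    (real_inner_comm α₁ α₂ ▸ hobtuse) hPc
  rw [chamber_comm] at hK₂
  refine ⟨((K₁ + K₂ : ℝ≥0) + 1 : ℝ)⁻¹, by positivity, fun Λ hΛ₁ hΛ₂ lam =>
    ENNReal.ofReal_inv_add_one_mul_le ?_⟩
  change μH[1] {y | y ∈ P ∩ frontier (chamber α₁ α₂) ∧ lam ≤ ⟪Λ, y⟫} ≤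
    (K₁ + K₂ : ℝ≥0) * μH[1] {y | y ∈ frontier P ∩ chamber α₁ α₂ ∧ lam ≤ ⟪Λ, y⟫}
  calc _ ≤ μH[1] ({y | y ∈ P ∩ chamber α₁ α₂ ∧ ⟪α₁, y⟫ = 0 ∧ lam ≤ ⟪Λ, y⟫} ∪
          {y | y ∈ P ∩ chamber α₁ α₂ ∧ ⟪α₂, y⟫ = 0 ∧ lam ≤ ⟪Λ, y⟫}) := by
        refine measure_mono fun y ⟨⟨hyP, hyV⟩, hylam⟩ => ?_
        rcases frontier_chamber_subset α₁ α₂ hyV with ⟨hy, h⟩ | ⟨hy, h⟩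
        exacts [Or.inl ⟨⟨hyP, hy⟩, h, hylam⟩, Or.inr ⟨⟨hyP, hy⟩, h, hylam⟩]
    _ ≤ _ := (measure_union_le _ _).trans (add_le_add (hK₁ Λ ⟨hΛ₁, hΛ₂⟩ lam)
          (hK₂ Λ ⟨hΛ₁, hΛ₂⟩ lam))
    _ = _ := by rw [ENNReal.coe_add, add_mul]

/-- Let `α₁, α₂` be linearly independent vectors in `ℝ²` with
`⟨α₁,α₂⟩ ≤ 0`, generating a finite reflection group `W` with dominant chamber
`V₊ = {⟨α₁,·⟩ ≥ 0, ⟨α₂,·⟩ ≥ 0}`, and let `P` be a `W`-invariant convex polytope with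
nonempty interior. Then there is a constant `c > 0` depending only on `P, α₁, α₂`
such that for every `Λ ∈ V₊` and `λ ∈ ℝ`,
`H¹({y ∈ ∂P ∩ V₊ : ⟨Λ,y⟩ ≥ λ}) ≥ c · H¹({y ∈ P ∩ ∂V₊ : ⟨Λ,y⟩ ≥ λ})`. -/
theorem stmt8 (α₁ α₂ : Euc2) (hα₁ : α₁ ≠ 0) (hα₂ : α₂ ≠ 0)
    (hind : LinearIndependent ℝ ![α₁, α₂]) (hobtuse : ⟪α₁, α₂⟫ ≤ 0)
    (W : Subgroup (Euc2 ≃ₗᵢ[ℝ] Euc2))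
    (hW : W = Subgroup.closure
        {g : Euc2 ≃ₗᵢ[ℝ] Euc2 |
          (∀ x, g x = x - (2 * ⟪α₁, x⟫ / ⟪α₁, α₁⟫) • α₁) ∨
          (∀ x, g x = x - (2 * ⟪α₂, x⟫ / ⟪α₂, α₂⟫) • α₂)})
    (hWfin : Finite W)
    (P : Set Euc2) (V : Finset Euc2) (hP : P = convexHull ℝ (V : Set Euc2))
    (hPint : (interior P).Nonempty)
    (hPW : ∀ g ∈ W, ∀ y ∈ P, g y ∈ P) :
    ∃ c : ℝ, 0 < c ∧
      ∀ Λ : Euc2, 0 ≤ ⟪α₁, Λ⟫ → 0 ≤ ⟪α₂, Λ⟫ → ∀ lam : ℝ,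
        ENNReal.ofReal c *
            μH[(1 : ℝ)] {y | y ∈ P ∩ frontier {z : Euc2 | 0 ≤ ⟪α₁, z⟫ ∧ 0 ≤ ⟪α₂, z⟫} ∧
              lam ≤ ⟪Λ, y⟫} ≤
          μH[(1 : ℝ)] {y | y ∈ frontier P ∩ {z : Euc2 | 0 ≤ ⟪α₁, z⟫ ∧ 0 ≤ ⟪α₂, z⟫} ∧
            lam ≤ ⟪Λ, y⟫} :=
  stmt8_general α₁ α₂ hind hobtuse P V hP
end
end

section
/- Let K ⊂ ℝ² be a compact convex set with nonempty interior (points written z = (x,y)) such that ∫_K y·x² dx dy = 0. Then for every λ with inf{y : (x,y) ∈ K} < λ < sup{y : (x,y) ∈ K}, one has ∫_{K ∩ {(x,y) : y ≥ λ}} y·x² dx dy > 0. -/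
open MeasureTheory Set Function

noncomputable section

lemma line_null : (volume : Measure (ℝ × ℝ)) {p : ℝ × ℝ | p.1 = 0} = 0 := by
  have h : {p : ℝ × ℝ | p.1 = 0} = ({0} : Set ℝ) ×ˢ (univ : Set ℝ) := by
    ext p
    simp only [Set.mem_setOf_eq, Set.mem_prod, Set.mem_singleton_iff, Set.mem_univ, and_true]
  rw [h, Measure.volume_eq_prod, Measure.prod_prod]
  simp

lemma reach_above (K : Set (ℝ × ℝ)) (hKconv : Convex ℝ K)
    {w : ℝ × ℝ} (hw : w ∈ interior K) {p : ℝ × ℝ} (hp : p ∈ K)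
    {c : ℝ} (hc : c < p.2) : ∃ q ∈ interior K, c < q.2 := by
  by_cases h : c < w.2
  · exact ⟨w, hw, h⟩
  push_neg at h
  have hwp : w.2 < p.2 := lt_of_le_of_lt h hc
  have hd : 0 < p.2 - w.2 := by linarith
  set t0 : ℝ := (c - w.2) / (p.2 - w.2) with ht0def
  have ht0_nonneg : 0 ≤ t0 := div_nonneg (by linarith) hd.le
  have ht0_lt : t0 < 1 := (div_lt_one hd).2 (by linarith)
  have ht0_eq : t0 * (p.2 - w.2) = c - w.2 := div_mul_cancel₀ _ hd.ne'
  set t : ℝ := (t0 + 1) / 2 with htdef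
  have ht_gt : t0 < t := by rw [htdef]; linarith
  have ht_lt : t < 1 := by rw [htdef]; linarith
  have ht_nonneg : 0 ≤ t := le_trans ht0_nonneg ht_gt.le
  refine ⟨(1 - t) • w + t • p,
    hKconv.combo_interior_closure_mem_interior hw (subset_closure hp)
      (by linarith) ht_nonneg (by ring), ?_⟩
  have : ((1 - t) • w + t • p).2 = (1 - t) * w.2 + t * p.2 := rfl
  rw [this]
  nlinarith [mul_lt_mul_of_pos_right ht_gt hd]

lemma reach_below (K : Set (ℝ × ℝ)) (hKconv : Convex ℝ K)
    {w : ℝ × ℝ} (hw : w ∈ interior K) {p : ℝ × ℝ} (hp : p ∈ K)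
    {c : ℝ} (hc : p.2 < c) : ∃ q ∈ interior K, q.2 < c := by
  by_cases h : w.2 < c
  · exact ⟨w, hw, h⟩
  push_neg at h
  have hwp : p.2 < w.2 := lt_of_lt_of_le hc h
  have hd : 0 < w.2 - p.2 := by linarith
  set t0 : ℝ := (w.2 - c) / (w.2 - p.2) with ht0def
  have ht0_nonneg : 0 ≤ t0 := div_nonneg (by linarith) hd.le
  have ht0_lt : t0 < 1 := (div_lt_one hd).2 (by linarith)
  have ht0_eq : t0 * (w.2 - p.2) = w.2 - c := div_mul_cancel₀ _ hd.ne'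
  set t : ℝ := (t0 + 1) / 2 with htdef
  have ht_gt : t0 < t := by rw [htdef]; linarith
  have ht_lt : t < 1 := by rw [htdef]; linarith
  have ht_nonneg : 0 ≤ t := le_trans ht0_nonneg ht_gt.le
  refine ⟨(1 - t) • w + t • p,
    hKconv.combo_interior_closure_mem_interior hw (subset_closure hp)
      (by linarith) ht_nonneg (by ring), ?_⟩
  have : ((1 - t) • w + t • p).2 = (1 - t) * w.2 + t * p.2 := rfl
  rw [this]
  nlinarith [mul_lt_mul_of_pos_right ht_gt hd]

/-- Let `K ⊂ ℝ²` be a compact convex set with nonempty interior such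
that `∫_K y x² dx dy = 0`. Then for every `λ` strictly between the infimum and the
supremum of the `y`-coordinate on `K`, `∫_{K ∩ {y ≥ λ}} y x² dx dy > 0`. -/
theorem stmt10 (K : Set (ℝ × ℝ)) (hKcpt : IsCompact K) (hKconv : Convex ℝ K)
    (hKint : (interior K).Nonempty)
    (hzero : (∫ z in K, z.2 * z.1 ^ 2) = 0) :
    ∀ lam : ℝ, sInf (Prod.snd '' K) < lam → lam < sSup (Prod.snd '' K) →
      0 < ∫ z in K ∩ {z : ℝ × ℝ | lam ≤ z.2}, z.2 * z.1 ^ 2 := by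
  intro lam hlow hhigh
  obtain ⟨w, hw⟩ := hKint
  have hKne : K.Nonempty := ⟨w, interior_subset hw⟩
  have hKmeas : MeasurableSet K := hKcpt.isClosed.measurableSet
  have hcont : Continuous (fun z : ℝ × ℝ => z.2 * z.1 ^ 2) := by continuity
  have hintK : IntegrableOn (fun z : ℝ × ℝ => z.2 * z.1 ^ 2) K :=
    hcont.continuousOn.integrableOn_compact hKcpt
  have himg : IsCompact (Prod.snd '' K) := hKcpt.image continuous_snd
  have himgne : (Prod.snd '' K).Nonempty := hKne.image _
  have hsnd_meas : MeasurableSet {z : ℝ × ℝ | lam ≤ z.2} :=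
    measurableSet_le measurable_const measurable_snd
  rcases le_or_gt 0 lam with hlam0 | hlam0
  · -- case 0 ≤ lam : integrand nonneg on the set
    obtain ⟨p, hpK, hpeq⟩ := himg.sSup_mem himgne
    have hplam : lam < p.2 := by rwa [hpeq]
    obtain ⟨q, hq, hqlam⟩ := reach_above K hKconv hw hpK hplam
    set s := K ∩ {z : ℝ × ℝ | lam ≤ z.2} with hsdef
    have hsmeas : MeasurableSet s := hKmeas.inter hsnd_meas
    have hints : IntegrableOn (fun z : ℝ × ℝ => z.2 * z.1 ^ 2) s :=
      hintK.mono_set inter_subset_left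
    have hnn : 0 ≤ᵐ[volume.restrict s] fun z : ℝ × ℝ => z.2 * z.1 ^ 2 := by
      refine ae_restrict_of_forall_mem hsmeas ?_
      intro z hz
      exact mul_nonneg (le_trans hlam0 hz.2) (sq_nonneg _)
    rw [setIntegral_pos_iff_support_of_nonneg_ae hnn hints]
    set U := interior K ∩ {z : ℝ × ℝ | lam < z.2} with hUdef
    have hUopen : IsOpen U := isOpen_interior.inter (isOpen_lt continuous_const continuous_snd)
    have hUne : U.Nonempty := ⟨q, hq, hqlam⟩
    have hsub : U \ {p : ℝ × ℝ | p.1 = 0} ⊆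
        Function.support (fun z : ℝ × ℝ => z.2 * z.1 ^ 2) ∩ s := by
      rintro z ⟨⟨hz1, hz2⟩, hz3⟩
      have hx : z.1 ≠ 0 := hz3
      have hy : 0 < z.2 := lt_of_le_of_lt hlam0 hz2
      refine ⟨?_, interior_subset hz1, (le_of_lt hz2 : lam ≤ z.2)⟩
      simp only [Function.mem_support]
      positivity
    calc (0 : ENNReal) < volume U := hUopen.measure_pos volume hUne
      _ = volume (U \ {p : ℝ × ℝ | p.1 = 0}) := (measure_diff_null line_null).symm
      _ ≤ _ := measure_mono hsub
  · -- case lam < 0 : use the vanishing total integral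
    obtain ⟨p, hpK, hpeq⟩ := himg.sInf_mem himgne
    have hplam : p.2 < lam := by rwa [hpeq]
    obtain ⟨q, hq, hqlam⟩ := reach_below K hKconv hw hpK hplam
    have hsplit := integral_inter_add_diff (μ := volume) (s := K)
      (t := {z : ℝ × ℝ | lam ≤ z.2}) hsnd_meas hintK
    rw [hzero] at hsplit
    have hkey : 0 < ∫ z in K \ {z : ℝ × ℝ | lam ≤ z.2}, -(z.2 * z.1 ^ 2) := by
      set s := K \ {z : ℝ × ℝ | lam ≤ z.2} with hsdef
      have hsmeas : MeasurableSet s := hKmeas.diff hsnd_meas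
      have hints : IntegrableOn (fun z : ℝ × ℝ => -(z.2 * z.1 ^ 2)) s :=
        (hintK.mono_set diff_subset).neg
      have hnn : 0 ≤ᵐ[volume.restrict s] fun z : ℝ × ℝ => -(z.2 * z.1 ^ 2) := by
        refine ae_restrict_of_forall_mem hsmeas ?_
        intro z hz
        have hy : z.2 < lam := lt_of_not_ge hz.2
        have h2 : z.2 * z.1 ^ 2 ≤ 0 := mul_nonpos_of_nonpos_of_nonneg (by linarith) (sq_nonneg _)
        show (0 : ℝ) ≤ -(z.2 * z.1 ^ 2)
        linarith
      rw [setIntegral_pos_iff_support_of_nonneg_ae hnn hints]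
      set U := interior K ∩ {z : ℝ × ℝ | z.2 < lam} with hUdef
      have hUopen : IsOpen U := isOpen_interior.inter (isOpen_lt continuous_snd continuous_const)
      have hUne : U.Nonempty := ⟨q, hq, hqlam⟩
      have hsub : U \ {p : ℝ × ℝ | p.1 = 0} ⊆
          Function.support (fun z : ℝ × ℝ => -(z.2 * z.1 ^ 2)) ∩ s := by
        rintro z ⟨⟨hz1, hz2⟩, hz3⟩
        have hx : z.1 ≠ 0 := hz3
        have hy : z.2 < 0 := lt_trans hz2 hlam0
        refine ⟨?_, interior_subset hz1, (not_le.2 hz2 : ¬ lam ≤ z.2)⟩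
        simp only [Function.mem_support, neg_ne_zero]
        have h1 : 0 < z.1 ^ 2 := by positivity
        exact ne_of_lt (mul_neg_of_neg_of_pos hy h1)
      calc (0 : ENNReal) < volume U := hUopen.measure_pos volume hUne
        _ = volume (U \ {p : ℝ × ℝ | p.1 = 0}) := (measure_diff_null line_null).symm
        _ ≤ _ := measure_mono hsub
    rw [integral_neg] at hkey
    linarith
end
end

section
/- Let K ⊂ ℝ² be a compact convex set with nonempty interior containing the origin (points written z = (x,y)), let a > 0 with (a,0) in the interior of K, and let u = (u₁,u₂) ∈ ℝ²∖{(0,0)} with u₁ ≥ 0. Define f(λ) := ∫_{K ∩ {z : ⟨u,z⟩ ≥ λ}} (u₁(x−a) + u₂ y)·x² dx dy. If f(0) ≥ 0, then f(λ) > 0 for every λ with 0 < λ < sup_{z∈K} ⟨u,z⟩. -/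
/-!
Write `φ z = u₁ x + u₂ y`, so the integrand is `(φ z - φ (a, 0)) · x²`. If `λ ≥ φ (a, 0)`, the
integrand is nonnegative on `{φ ≥ λ}` and positive on a nonempty open subset of it, so
`f(λ) > 0`. If `0 < λ < φ (a, 0)`, then `f(0) = ∫_{K ∩ {0 ≤ φ < λ}} … + f(λ)`, and the slab
integral is negative: the integrand is nonpositive there and negative near the open segment from
`0` to `(a, 0)`, which lies in the interior of `K`. Hence `f(λ) > f(0) ≥ 0`.
-/

open MeasureTheory Set

theorem setIntegral_pos_of_isOpen_subset {X : Type*} [TopologicalSpace X] [MeasurableSpace X]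
    {μ : Measure X} [μ.IsOpenPosMeasure] {f : X → ℝ} {S U : Set X} (hS : MeasurableSet S)
    (hf : IntegrableOn f S μ) (hf_nonneg : ∀ x ∈ S, 0 ≤ f x) (hU : IsOpen U)
    (hU_ne : U.Nonempty) (hUS : U ⊆ S) (hf_pos : ∀ x ∈ U, 0 < f x) :
    0 < ∫ x in S, f x ∂μ := by
  rw [setIntegral_pos_iff_support_of_nonneg_ae (ae_restrict_of_forall_mem hS hf_nonneg) hf]
  exact (hU.measure_pos μ hU_ne).trans_le
    (measure_mono fun x hx => ⟨(hf_pos x hx).ne', hUS hx⟩)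

theorem setIntegral_inter_preimage_Ici_eq_add {X : Type*} [MeasurableSpace X] {μ : Measure X}
    {f φ : X → ℝ} {K : Set X} (hK : MeasurableSet K) (hφ : Measurable φ)
    (hf : IntegrableOn f K μ) {α β : ℝ} (hαβ : α ≤ β) :
    ∫ x in K ∩ φ ⁻¹' Ici α, f x ∂μ =
      ∫ x in K ∩ φ ⁻¹' Ico α β, f x ∂μ + ∫ x in K ∩ φ ⁻¹' Ici β, f x ∂μ := by
  have hdisj : Disjoint (Ico α β) (Ici β) :=
    (Iio_disjoint_Ici le_rfl).mono_left Ico_subset_Iio_self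
  rw [← Ico_union_Ici_eq_Ici hαβ, preimage_union, inter_union_distrib_left]
  exact setIntegral_union ((hdisj.preimage φ).mono inter_subset_right inter_subset_right)
    (hK.inter (hφ measurableSet_Ici)) (hf.mono_set inter_subset_left)
    (hf.mono_set inter_subset_left)

theorem Convex.interior_inter_nonempty_of_isOpen {E : Type*} [AddCommGroup E] [Module ℝ E]
    [TopologicalSpace E] [IsTopologicalAddGroup E] [ContinuousSMul ℝ E] {K V : Set E}
    (hK : Convex ℝ K) (hK_int : (interior K).Nonempty) (hV : IsOpen V)
    (hKV : (K ∩ V).Nonempty) :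
    (interior K ∩ V).Nonempty := by
  obtain ⟨q, hqK, hqV⟩ := hKV
  have hq : q ∈ closure (interior K) := by
    rw [hK.closure_interior_eq_closure_of_nonempty_interior hK_int]
    exact subset_closure hqK
  rw [inter_comm]
  exact mem_closure_iff.1 hq V hV hqV

theorem dense_setOf_fst_sq_pos : Dense {z : ℝ × ℝ | 0 < z.1 ^ 2} := by
  have h : {z : ℝ × ℝ | 0 < z.1 ^ 2} = Prod.fst ⁻¹' {0}ᶜ := by
    ext z
    simp [sq_pos_iff]
  rw [h]
  exact (dense_compl_singleton 0).preimage isOpenMap_fst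

section WeightedLevelIntegral

variable {E : Type*} [NormedAddCommGroup E] [NormedSpace ℝ E] [MeasurableSpace E]
  [BorelSpace E] {μ : Measure E} [μ.IsOpenPosMeasure] [IsFiniteMeasureOnCompacts μ]
  {K : Set E} {w : E → ℝ}

theorem setIntegral_mul_pos_of_convex {S V : Set E} {g : E → ℝ} (hK_cpt : IsCompact K)
    (hK : Convex ℝ K) (hK_int : (interior K).Nonempty) (hSK : S ⊆ K) (hS : MeasurableSet S)
    (hV : IsOpen V) (hKV : (K ∩ V).Nonempty) (hVS : K ∩ V ⊆ S) (hg : Continuous g)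
    (hg_nonneg : ∀ z ∈ S, 0 ≤ g z) (hg_pos : ∀ z ∈ V, 0 < g z) (hw : Continuous w)
    (hw_nonneg : ∀ z, 0 ≤ w z) (hw_dense : Dense {z | 0 < w z}) :
    0 < ∫ z in S, g z * w z ∂μ := by
  have hU : IsOpen (interior K ∩ V) := isOpen_interior.inter hV
  refine setIntegral_pos_of_isOpen_subset (U := interior K ∩ V ∩ {z | 0 < w z}) hS
    (((hg.mul hw).continuousOn.integrableOn_compact hK_cpt).mono_set hSK)
    (fun z hz => mul_nonneg (hg_nonneg z hz) (hw_nonneg z))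
    (hU.inter (isOpen_lt continuous_const hw))
    (hw_dense.inter_open_nonempty _ hU (hK.interior_inter_nonempty_of_isOpen hK_int hV hKV))
    (fun z hz => hVS ⟨interior_subset hz.1.1, hz.1.2⟩)
    (fun z hz => mul_pos (hg_pos z hz.1.2) hz.2)

variable {φ : E →L[ℝ] ℝ} {o p : E}

theorem setIntegral_superlevel_pos_of_le (hK_cpt : IsCompact K) (hK : Convex ℝ K)
    (hp : p ∈ interior K) (hw : Continuous w) (hw_nonneg : ∀ z, 0 ≤ w z)
    (hw_dense : Dense {z | 0 < w z}) {lam : ℝ} (hp_lam : φ p ≤ lam)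
    (hlam : lam < sSup (φ '' K)) :
    0 < ∫ z in K ∩ φ ⁻¹' Ici lam, (φ z - φ p) * w z ∂μ := by
  obtain ⟨_, ⟨q, hqK, rfl⟩, hq⟩ :=
    exists_lt_of_lt_csSup (Nonempty.image φ ⟨p, interior_subset hp⟩) hlam
  refine setIntegral_mul_pos_of_convex (V := φ ⁻¹' Ioi lam) hK_cpt hK ⟨p, hp⟩
    inter_subset_left (hK_cpt.isClosed.measurableSet.inter (φ.measurable measurableSet_Ici))
    (isOpen_Ioi.preimage φ.continuous) ⟨q, hqK, hq⟩
    (inter_subset_inter_right K (preimage_mono Ioi_subset_Ici_self)) (by fun_prop)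
    (fun z hz => sub_nonneg.2 (hp_lam.trans hz.2))
    (fun z hz => sub_pos.2 (hp_lam.trans_lt hz)) hw hw_nonneg hw_dense

theorem setIntegral_slab_neg (hK_cpt : IsCompact K) (hK : Convex ℝ K) (ho : o ∈ K)
    (hp : p ∈ interior K) (hw : Continuous w) (hw_nonneg : ∀ z, 0 ≤ w z)
    (hw_dense : Dense {z | 0 < w z}) {lam : ℝ} (ho_lam : φ o < lam) (hlam_p : lam < φ p) :
    ∫ z in K ∩ φ ⁻¹' Ico (φ o) lam, (φ z - φ p) * w z ∂μ < 0 := by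
  have hmid : (φ o + lam) / 2 ∈ φ '' segment ℝ o p := by
    have hseg : φ '' segment ℝ o p = Icc (φ o) (φ p) := by
      rw [← segment_eq_Icc (by linarith)]
      exact image_segment ℝ φ.toAffineMap o p
    rw [hseg]
    constructor <;> linarith
  obtain ⟨z₀, hz₀, hφz₀⟩ := hmid
  have hpos : 0 < ∫ z in K ∩ φ ⁻¹' Ico (φ o) lam, (φ p - φ z) * w z ∂μ := by
    refine setIntegral_mul_pos_of_convex (V := φ ⁻¹' Ioo (φ o) lam) hK_cpt hK ⟨p, hp⟩
      inter_subset_left (hK_cpt.isClosed.measurableSet.inter (φ.measurable measurableSet_Ico))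
      (isOpen_Ioo.preimage φ.continuous)
      ⟨z₀, hK.segment_subset ho (interior_subset hp) hz₀, by
        simp only [mem_preimage, mem_Ioo, hφz₀]; constructor <;> linarith⟩
      (inter_subset_inter_right K (preimage_mono Ioo_subset_Ico_self)) (by fun_prop)
      (fun z hz => sub_nonneg.2 (hz.2.2.trans hlam_p).le)
      (fun z hz => sub_pos.2 (hz.2.trans hlam_p)) hw hw_nonneg hw_dense
  have hneg : ∀ z, (φ p - φ z) * w z = -((φ z - φ p) * w z) := fun z => by ring
  simp only [hneg, integral_neg] at hpos
  linarith

theorem setIntegral_superlevel_pos (hK_cpt : IsCompact K) (hK : Convex ℝ K) (ho : o ∈ K)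
    (hp : p ∈ interior K) (hw : Continuous w) (hw_nonneg : ∀ z, 0 ≤ w z)
    (hw_dense : Dense {z | 0 < w z})
    (hF : 0 ≤ ∫ z in K ∩ φ ⁻¹' Ici (φ o), (φ z - φ p) * w z ∂μ) {lam : ℝ}
    (ho_lam : φ o < lam) (hlam : lam < sSup (φ '' K)) :
    0 < ∫ z in K ∩ φ ⁻¹' Ici lam, (φ z - φ p) * w z ∂μ := by
  rcases le_or_gt (φ p) lam with hp_lam | hlam_p
  · exact setIntegral_superlevel_pos_of_le hK_cpt hK hp hw hw_nonneg hw_dense hp_lam hlam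
  · have hint : IntegrableOn (fun z => (φ z - φ p) * w z) K μ :=
      (by fun_prop : Continuous fun z => (φ z - φ p) * w z).continuousOn.integrableOn_compact
        hK_cpt
    rw [setIntegral_inter_preimage_Ici_eq_add hK_cpt.isClosed.measurableSet φ.measurable hint
      ho_lam.le] at hF
    linarith [setIntegral_slab_neg (μ := μ) hK_cpt hK ho hp hw hw_nonneg hw_dense ho_lam hlam_p]

end WeightedLevelIntegral

theorem stmt11_general (K : Set (ℝ × ℝ)) (hKcpt : IsCompact K) (hKconv : Convex ℝ K)
    (h0 : ((0, 0) : ℝ × ℝ) ∈ K)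
    (a : ℝ) (haK : ((a, 0) : ℝ × ℝ) ∈ interior K)
    (u₁ u₂ : ℝ)
    (hf0 : 0 ≤ ∫ z in K ∩ {z : ℝ × ℝ | 0 ≤ u₁ * z.1 + u₂ * z.2},
        (u₁ * (z.1 - a) + u₂ * z.2) * z.1 ^ 2) :
    ∀ lam : ℝ, 0 < lam →
      lam < sSup ((fun z : ℝ × ℝ => u₁ * z.1 + u₂ * z.2) '' K) →
      0 < ∫ z in K ∩ {z : ℝ × ℝ | lam ≤ u₁ * z.1 + u₂ * z.2},
          (u₁ * (z.1 - a) + u₂ * z.2) * z.1 ^ 2 := by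
  intro lam hlam hlam_sup
  let φ : ℝ × ℝ →L[ℝ] ℝ :=
    u₁ • ContinuousLinearMap.fst ℝ ℝ ℝ + u₂ • ContinuousLinearMap.snd ℝ ℝ ℝ
  have hφ : ⇑φ = fun z => u₁ * z.1 + u₂ * z.2 := rfl
  have hintegrand : ∀ z : ℝ × ℝ,
      (φ z - φ (a, 0)) * z.1 ^ 2 = (u₁ * (z.1 - a) + u₂ * z.2) * z.1 ^ 2 := fun z => by
    simp only [hφ]; ring
  have key := setIntegral_superlevel_pos (μ := volume) (φ := φ) (w := fun z => z.1 ^ 2)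
    hKcpt hKconv h0 haK (by fun_prop) (fun z => sq_nonneg z.1) dense_setOf_fst_sq_pos
  have hφ₀ : φ (0, 0) = 0 := by simp [hφ]
  simp only [hintegrand, hφ₀] at key
  exact key hf0 hlam hlam_sup

/-- Let `K ⊂ ℝ²` be a compact convex set with nonempty interior
containing the origin, let `a > 0` with `(a,0)` in the interior of `K`, and let
`u = (u₁,u₂) ≠ 0` with `u₁ ≥ 0`. Set
`f(λ) = ∫_{K ∩ {⟨u,z⟩ ≥ λ}} (u₁(x−a) + u₂y) x² dx dy`. If `f(0) ≥ 0`, then `f(λ) > 0`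
for every `0 < λ < sup_K ⟨u,·⟩`. -/
theorem stmt11 (K : Set (ℝ × ℝ)) (hKcpt : IsCompact K) (hKconv : Convex ℝ K)
    (hKint : (interior K).Nonempty) (h0 : ((0, 0) : ℝ × ℝ) ∈ K)
    (a : ℝ) (ha : 0 < a) (haK : ((a, 0) : ℝ × ℝ) ∈ interior K)
    (u₁ u₂ : ℝ) (hu : (u₁, u₂) ≠ ((0 : ℝ), (0 : ℝ))) (hu₁ : 0 ≤ u₁)
    (hf0 : 0 ≤ ∫ z in K ∩ {z : ℝ × ℝ | 0 ≤ u₁ * z.1 + u₂ * z.2},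
        (u₁ * (z.1 - a) + u₂ * z.2) * z.1 ^ 2) :
    ∀ lam : ℝ, 0 < lam →
      lam < sSup ((fun z : ℝ × ℝ => u₁ * z.1 + u₂ * z.2) '' K) →
      0 < ∫ z in K ∩ {z : ℝ × ℝ | lam ≤ u₁ * z.1 + u₂ * z.2},
          (u₁ * (z.1 - a) + u₂ * z.2) * z.1 ^ 2 :=
  stmt11_general K hKcpt hKconv h0 a haK u₁ u₂ hf0
end

section
/- Let W be a finite subgroup of the orthogonal group of ℝⁿ whose only fixed vector is 0, and let ϖ ∈ ℝⁿ be a vector whose orbit {w·ϖ : w ∈ W} spans ℝⁿ. Then the convex hull conv(W·ϖ) has nonempty interior; moreover, the convex function u(y) := max_{w∈W} ⟨ϖ, w·y⟩ satisfies ∂u(0) = conv(W·ϖ), and consequently for every neighborhood U of 0 the set ⋃_{x∈U} ∂u(x) has positive Lebesgue measure (so u is not a generalized Alexandrov solution of the homogeneous Monge–Ampère equation det D²u = 0 on any neighborhood of 0). -/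
open MeasureTheory RealInnerProductSpace
open scoped ENNReal

noncomputable section

/-!
The function `u` is the support function of the finite orbit `S = W·ϖ`, so its subdifferential
at `0` is `conv S` (one inclusion by convexity, the other by separating a point from `conv S`
with a hyperplane). Since `W` fixes only `0`, the orbit sums to `0`; hence `0 ∈ conv S`, the
affine span of `S` is its linear span `ℝⁿ`, and `conv S` has interior. As `∂u(0)` lies in
`⋃_{x∈U} ∂u(x)`, this union contains a nonempty open set.
-/

variable {E : Type*} [NormedAddCommGroup E] [InnerProductSpace ℝ E]

def subdifferential (u : E → ℝ) (x : E) : Set E :=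
  {p | ∀ y, u x + ⟪p, y - x⟫ ≤ u y}

theorem convex_setOf_inner_le (u : E → ℝ) : Convex ℝ {p : E | ∀ y, ⟪p, y⟫ ≤ u y} := by
  simp only [Set.ofPred_forall]
  exact convex_iInter fun y => convex_halfSpace_le
    ⟨fun a b => inner_add_left a b y, fun c a => real_inner_smul_left a y c⟩ (u y)

theorem subdifferential_zero_eq_convexHull [CompleteSpace E] {S : Set E} (hS : S.Finite)
    {u : E → ℝ} (hu : ∀ y, IsGreatest ((⟪·, y⟫) '' S) (u y)) :
    subdifferential u 0 = convexHull ℝ S := by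
  have hu0 : u 0 = 0 := by
    obtain ⟨⟨s, -, hs⟩, -⟩ := hu 0
    simpa using hs.symm
  have hsubdiff : subdifferential u 0 = {p | ∀ y, ⟪p, y⟫ ≤ u y} := by
    simp [subdifferential, hu0]
  rw [hsubdiff]
  refine subset_antisymm (fun p hp => ?_) (convexHull_min ?_ (convex_setOf_inner_le u))
  · by_contra hp_conv
    obtain ⟨f, c, hf_conv, hf_p⟩ := geometric_hahn_banach_closed_point
      (convex_convexHull ℝ S) (hS.isCompact_convexHull (𝕜 := ℝ)).isClosed hp_conv
    set v := (InnerProductSpace.toDual ℝ E).symm f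
    have hv : ∀ x, ⟪x, v⟫ = f x := fun x => by
      rw [real_inner_comm]; exact InnerProductSpace.toDual_symm_apply
    obtain ⟨s, hs, hsv⟩ := (hu v).1
    have hfs := hf_conv s (subset_convexHull ℝ S hs)
    have hpv : ⟪p, v⟫ ≤ ⟪s, v⟫ := (hp v).trans_eq hsv.symm
    rw [hv, hv] at hpv
    linarith
  · exact fun s hs y => (hu y).2 ⟨s, hs, rfl⟩

theorem zero_mem_convexHull_range_of_sum_eq_zero {ι : Type*} [Fintype ι] [Nonempty ι]
    {v : ι → E} (hv : ∑ i, v i = 0) : (0 : E) ∈ convexHull ℝ (Set.range v) := by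
  have := Finset.univ.centerMass_mem_convexHull (w := fun _ => (1 : ℝ)) (z := v)
    (fun _ _ => zero_le_one) (by simp [Fintype.card_pos]) (fun i _ => Set.mem_range_self i)
  simpa [Finset.centerMass, hv] using this

theorem affineSpan_eq_top_of_zero_mem {k V : Type*} [Ring k] [AddCommGroup V] [Module k V]
    {s : Set V} (h0 : (0 : V) ∈ affineSpan k s) (hs : Submodule.span k s = ⊤) :
    affineSpan k s = ⊤ := by
  rw [← AffineSubspace.direction_eq_top_iff_of_nonempty ⟨0, h0⟩, eq_top_iff, ← hs,
    Submodule.span_le]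
  intro v hv
  simpa using AffineSubspace.vsub_mem_direction (mem_affineSpan k hv) h0

namespace LinearIsometryEquiv

variable (W : Subgroup (E ≃ₗᵢ[ℝ] E)) (x : E)

theorem orbit_eq_range : {y | ∃ g ∈ W, g x = y} = Set.range fun g : W => (g : E ≃ₗᵢ[ℝ] E) x := by
  ext y
  simp

theorem image_inner_orbit (y : E) :
    (⟪·, y⟫) '' {z | ∃ g ∈ W, g x = z} = {t | ∃ g ∈ W, t = ⟪x, g y⟫} := by
  ext t
  constructor
  · rintro ⟨_, ⟨g, hg, rfl⟩, rfl⟩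
    exact ⟨g⁻¹, W.inv_mem hg, g.inner_map_eq_flip x y⟩
  · rintro ⟨g, hg, rfl⟩
    refine ⟨g⁻¹ x, ⟨g⁻¹, W.inv_mem hg, rfl⟩, ?_⟩
    simpa using g.symm.inner_map_eq_flip x y

theorem apply_sum_orbit [Fintype W] {h : E ≃ₗᵢ[ℝ] E} (hh : h ∈ W) :
    h (∑ g : W, (g : E ≃ₗᵢ[ℝ] E) x) = ∑ g : W, (g : E ≃ₗᵢ[ℝ] E) x := by
  rw [map_sum]
  exact Fintype.sum_equiv (Equiv.mulLeft ⟨h, hh⟩) _ _ fun _ => rfl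

end LinearIsometryEquiv

/-- Let `W` be a finite group of linear isometries of `ℝⁿ` whose only
fixed vector is `0`, and let `ϖ ∈ ℝⁿ` have orbit spanning `ℝⁿ`. Then `conv(W·ϖ)` has
nonempty interior, the convex function `u(y) = max_{w∈W} ⟨ϖ, w y⟩` satisfies
`∂u(0) = conv(W·ϖ)`, and for every neighborhood `U` of `0` the set `⋃_{x∈U} ∂u(x)` has
positive Lebesgue measure (so `u` is not a generalized Alexandrov solution of
`det D²u = 0` on any neighborhood of `0`). -/
theorem stmt12 (n : ℕ) (W : Subgroup (Euc n ≃ₗᵢ[ℝ] Euc n)) (hWfin : Finite W)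
    (hfix : ∀ x : Euc n, (∀ g ∈ W, g x = x) → x = 0)
    (ϖ : Euc n)
    (hspan : Submodule.span ℝ {y : Euc n | ∃ g ∈ W, g ϖ = y} = ⊤)
    (u : Euc n → ℝ)
    (hu : ∀ y : Euc n, IsGreatest {t : ℝ | ∃ g ∈ W, t = ⟪ϖ, g y⟫} (u y)) :
    (interior (convexHull ℝ {y : Euc n | ∃ g ∈ W, g ϖ = y})).Nonempty ∧
    {p : Euc n | ∀ y : Euc n, u 0 + ⟪p, y - 0⟫ ≤ u y} =
      convexHull ℝ {y : Euc n | ∃ g ∈ W, g ϖ = y} ∧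
    ∀ U ∈ nhds (0 : Euc n),
      0 < volume (⋃ x ∈ U, {p : Euc n | ∀ y : Euc n, u x + ⟪p, y - x⟫ ≤ u y}) := by
  have := Fintype.ofFinite W
  have hS := LinearIsometryEquiv.orbit_eq_range W ϖ
  set S := {y : Euc n | ∃ g ∈ W, g ϖ = y}
  have hsum : ∑ g : W, (g : Euc n ≃ₗᵢ[ℝ] Euc n) ϖ = 0 :=
    hfix _ fun _ => LinearIsometryEquiv.apply_sum_orbit W ϖ
  have hsubdiff : subdifferential u 0 = convexHull ℝ S :=
    subdifferential_zero_eq_convexHull (by rw [hS]; exact Set.finite_range _)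
      fun y => LinearIsometryEquiv.image_inner_orbit W ϖ y ▸ hu y
  have hint : (interior (convexHull ℝ S)).Nonempty := by
    rw [interior_convexHull_nonempty_iff_affineSpan_eq_top]
    refine affineSpan_eq_top_of_zero_mem ?_ hspan
    refine convexHull_subset_affineSpan S ?_
    rw [hS]
    exact zero_mem_convexHull_range_of_sum_eq_zero hsum
  refine ⟨hint, hsubdiff, fun U hU => ?_⟩
  calc 0 < volume (interior (convexHull ℝ S)) := isOpen_interior.measure_pos volume hint
    _ ≤ _ := measure_mono <| interior_subset.trans <|
      hsubdiff ▸ Set.subset_biUnion_of_mem (u := subdifferential u) (mem_of_mem_nhds hU)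
end
end
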